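/- If there exists a covering array CA(m, s, k) and a covering array CA(n, r, k), then there exists a covering array CA(m+n, s·r, k) (obtained by concatenating row a_i of the first array with row b_j of the second for all pairs (i,j)). -/
import Mathlib


/-- Two vectors over `Fin k` are qualitatively independent if every ordered
pair of letters occurs in some coordinate. -/
def QIVec {N k : ℕ} (u v : Fin N → Fin k) : Prop :=
  ∀ a b : Fin k, ∃ i, u i = a ∧ v i = b

/-- If there exist covering arrays `CA(m, s, k)` and `CA(n, r, k)`, then there
exists a covering array `CA(m + n, s·r, k)`. -/
theorem CA_block_recursive {m n s r k : ℕ}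
    (A : Fin s → Fin m → Fin k) (hA : ∀ i j, i ≠ j → QIVec (A i) (A j))
    (B : Fin r → Fin n → Fin k) (hB : ∀ i j, i ≠ j → QIVec (B i) (B j)) :
    ∃ C : Fin (s * r) → Fin (m + n) → Fin k,
      ∀ i j, i ≠ j → QIVec (C i) (C j) := by
  classical
  let e : Fin (s * r) ≃ Fin s × Fin r := finProdFinEquiv.symm
  refine ⟨fun p q => Sum.elim (A (e p).1) (B (e p).2) (finSumFinEquiv.symm q),
    fun i j hij a b => ?_⟩
  have hne : e i ≠ e j := fun h => hij (e.injective h)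
  by_cases h1 : (e i).1 = (e j).1
  · have h2 : (e i).2 ≠ (e j).2 := by
      intro h2; exact hne (Prod.ext h1 h2)
    obtain ⟨q, hq1, hq2⟩ := hB _ _ h2 a b
    refine ⟨finSumFinEquiv (Sum.inr q), ?_, ?_⟩ <;>
      simp [Equiv.symm_apply_apply, hq1, hq2]
  · obtain ⟨q, hq1, hq2⟩ := hA _ _ h1 a b
    refine ⟨finSumFinEquiv (Sum.inl q), ?_, ?_⟩ <;>
      simp [Equiv.symm_apply_apply, hq1, hq2]
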